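/- Suppose a sequence of probability measures (μₙ) on (ℝ, Borel) converges weakly to a probability measure μ, and let F be a family of functions from ℝ to ℝ that is uniformly bounded and pointwise equicontinuous. Then sup_{f ∈ F} |∫ f dμₙ − ∫ f dμ| → 0 as n → ∞. -/

import Mathlib

/-!
Weak convergence makes `{μ} ∪ {μₙ}` tight (the converse half of Prokhorov's theorem), so up to
`η` all the mass of every measure lies in one compact set `K`. On `K` the family is totally bounded
for the sup distance: if `K` is covered by finitely many neighbourhoods `U_y` on which every
`f ∈ F` oscillates by less than `η`, then `f` is determined up to `3η` on `K` by the bounded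
vector `(f y)_y`. Hence finitely many `g ∈ F` approximate all of `F` on `K`, weak convergence is
uniform over these finitely many `g`, and the mass outside `K` costs at most `2Mη`.
-/

open MeasureTheory Filter Set Topology

lemma exists_finite_subset_forall_abs_sub_lt_of_equicontinuousAt {X : Type*} [TopologicalSpace X]
    {K : Set X} (hK : IsCompact K) {F : Set (X → ℝ)}
    (hF : ∀ x ∈ K, EquicontinuousAt ((↑) : F → X → ℝ) x) {M : ℝ}
    (hM : ∀ f ∈ F, ∀ x ∈ K, |f x| ≤ M) {ε : ℝ} (hε : 0 < ε) :
    ∃ G ⊆ F, G.Finite ∧ ∀ f ∈ F, ∃ g ∈ G, ∀ x ∈ K, |f x - g x| < ε := by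
  have hε3 : 0 < ε / 3 := by positivity
  obtain ⟨t, htK, hKt⟩ := hK.elim_nhds_subcover (fun x ↦ {y | ∀ f ∈ F, |f x - f y| < ε / 3})
    fun x hx ↦ by
      filter_upwards [Metric.equicontinuousAt_iff_right.1 (hF x hx) _ hε3] with y hy f hf
      exact hy ⟨f, hf⟩
  let eval : (X → ℝ) → t → ℝ := fun f i ↦ f i
  have hbdd : eval '' F ⊆ Icc (fun _ ↦ -M) (fun _ ↦ M) := by
    rintro _ ⟨f, hf, rfl⟩
    have hfi (i : t) := abs_le.1 (hM f hf i (htK i i.2))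
    exact ⟨fun i ↦ (hfi i).1, fun i ↦ (hfi i).2⟩
  obtain ⟨G, hGF, hGfin, hGnet⟩ := exists_subset_image_finite_and.1 <|
    Metric.finite_approx_of_totallyBounded ((totallyBounded_Icc _ _).subset hbdd) _ hε3
  refine ⟨G, hGF, hGfin, fun f hf ↦ ?_⟩
  obtain ⟨_, ⟨g, hg, rfl⟩, hfg⟩ := mem_iUnion₂.1 (hGnet (mem_image_of_mem eval hf))
  refine ⟨g, hg, fun x hx ↦ ?_⟩
  obtain ⟨i, hi, hxi⟩ := mem_iUnion₂.1 (hKt hx)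
  have hfgi : |f i - g i| < ε / 3 := (dist_pi_lt_iff hε3).1 (Metric.mem_ball.1 hfg) ⟨i, hi⟩
  calc |f x - g x| ≤ |f x - f i| + |f i - g i| + |g i - g x| := by
        linarith [abs_sub_le (f x) (f i) (g x), abs_sub_le (f i) (g i) (g x)]
    _ < ε / 3 + ε / 3 + ε / 3 := by
        gcongr
        exacts [abs_sub_comm (f x) _ ▸ hxi f hf, hxi g (hGF hg)]
    _ = ε := by ring

lemma exists_isCompact_forall_measureReal_compl_le_of_tendsto
    {X : Type*} [MeasurableSpace X] [PseudoMetricSpace X] [CompleteSpace X]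
    [SecondCountableTopology X] [OpensMeasurableSpace X]
    {μs : ℕ → ProbabilityMeasure X} {μ : ProbabilityMeasure X} (h : Tendsto μs atTop (𝓝 μ))
    {ε : ℝ} (hε : 0 < ε) :
    ∃ K, IsCompact K ∧ (μ : Measure X).real Kᶜ ≤ ε ∧ ∀ n, (μs n : Measure X).real Kᶜ ≤ ε := by
  obtain ⟨K, hK, hKc⟩ := isTightMeasureSet_iff_exists_isCompact_measure_compl_le.1
    (isTightMeasureSet_of_isCompact_closure (S := insert μ (range μs))
      h.isCompact_insert_range.closure) _ (ENNReal.ofReal_pos.2 hε)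
  refine ⟨K, hK, ENNReal.toReal_le_of_le_ofReal hε.le (hKc _ ⟨μ, mem_insert _ _, rfl⟩),
    fun n ↦ ENNReal.toReal_le_of_le_ofReal hε.le (hKc _ ⟨μs n, mem_insert_of_mem _ ⟨n, rfl⟩, rfl⟩)⟩

section Integral

variable {X : Type*} [MeasurableSpace X] {ν : Measure X} {f g : X → ℝ} {K : Set X}

lemma abs_integral_sub_integral_le [IsFiniteMeasure ν] (hf : Integrable f ν)
    (hg : Integrable g ν) (hK : MeasurableSet K) {a b : ℝ} (ha : ∀ x ∈ K, |f x - g x| ≤ a)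
    (hb : ∀ x ∈ Kᶜ, |f x - g x| ≤ b) :
    |∫ x, f x ∂ν - ∫ x, g x ∂ν| ≤ a * ν.real K + b * ν.real Kᶜ := by
  rw [← integral_sub hf hg, ← integral_add_compl (f := fun x ↦ f x - g x) hK (hf.sub hg)]
  refine (abs_add_le _ _).trans (add_le_add ?_ ?_)
  · exact norm_setIntegral_le_of_norm_le_const (f := fun x ↦ f x - g x) (measure_lt_top _ _) ha
  · exact norm_setIntegral_le_of_norm_le_const (f := fun x ↦ f x - g x) (measure_lt_top _ _) hb

lemma abs_integral_sub_integral_le_of_measureReal_compl_le [IsProbabilityMeasure ν]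
    (hf : AEStronglyMeasurable f ν) (hg : AEStronglyMeasurable g ν) {M : ℝ}
    (hfM : ∀ x, |f x| ≤ M) (hgM : ∀ x, |g x| ≤ M) (hK : MeasurableSet K) {η : ℝ}
    (hfg : ∀ x ∈ K, |f x - g x| ≤ η) (hνK : ν.real Kᶜ ≤ η) :
    |∫ x, f x ∂ν - ∫ x, g x ∂ν| ≤ (2 * M + 1) * η := by
  have hM : 0 ≤ M := (abs_nonneg _).trans (hfM (nonempty_of_isProbabilityMeasure ν).some)
  have hη : 0 ≤ η := measureReal_nonneg.trans hνK
  calc |∫ x, f x ∂ν - ∫ x, g x ∂ν| ≤ η * ν.real K + 2 * M * ν.real Kᶜ :=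
        abs_integral_sub_integral_le (.of_bound hf M (ae_of_all _ hfM))
          (.of_bound hg M (ae_of_all _ hgM)) hK hfg
          fun x _ ↦ by linarith [abs_sub (f x) (g x), hfM x, hgM x]
    _ ≤ η * 1 + 2 * M * η := by gcongr; exact measureReal_le_one
    _ = (2 * M + 1) * η := by ring

end Integral

theorem tendstoUniformlyOn_integral_of_equicontinuous {X : Type*} [MeasurableSpace X]
    [MetricSpace X] [CompleteSpace X] [SecondCountableTopology X] [OpensMeasurableSpace X]
    {μs : ℕ → ProbabilityMeasure X} {μ : ProbabilityMeasure X} (h : Tendsto μs atTop (𝓝 μ))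
    {F : Set (X → ℝ)} (hF : Equicontinuous ((↑) : F → X → ℝ)) {M : ℝ}
    (hM : ∀ f ∈ F, ∀ x, |f x| ≤ M) :
    TendstoUniformlyOn (fun n f ↦ ∫ x, f x ∂(μs n : Measure X)) (fun f ↦ ∫ x, f x ∂(μ : Measure X))
      atTop F := by
  replace hM : ∀ f ∈ F, ∀ x, |f x| ≤ |M| := fun f hf x ↦ (hM f hf x).trans (le_abs_self M)
  have hcont : ∀ f ∈ F, Continuous f := fun f hf ↦ hF.continuous ⟨f, hf⟩
  rw [Metric.tendstoUniformlyOn_iff]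
  intro ε hε
  -- two approximation errors `(2|M| + 1) η` and one convergence error `η`
  set η := ε / (4 * |M| + 3)
  have hη : 0 < η := by positivity
  obtain ⟨K, hK, hμK, hμsK⟩ := exists_isCompact_forall_measureReal_compl_le_of_tendsto h hη
  obtain ⟨G, hGF, hGfin, hGnet⟩ := exists_finite_subset_forall_abs_sub_lt_of_equicontinuousAt hK
    (fun x _ ↦ hF x) (fun f hf x _ ↦ hM f hf x) hη
  have hclose (ν : Measure X) [IsProbabilityMeasure ν] (hνK : ν.real Kᶜ ≤ η) {f g : X → ℝ}
      (hf : f ∈ F) (hg : g ∈ F) (hfg : ∀ x ∈ K, |f x - g x| < η) :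
      dist (∫ x, f x ∂ν) (∫ x, g x ∂ν) ≤ (2 * |M| + 1) * η :=
    abs_integral_sub_integral_le_of_measureReal_compl_le (hcont f hf).aestronglyMeasurable
      (hcont g hg).aestronglyMeasurable (hM f hf) (hM g hg) hK.measurableSet
      (fun x hx ↦ (hfg x hx).le) hνK
  have hGconv : ∀ᶠ n in atTop, ∀ g ∈ G,
      dist (∫ x, g x ∂(μs n : Measure X)) (∫ x, g x ∂(μ : Measure X)) < η :=
    hGfin.eventually_all.2 fun g hg ↦
      (ProbabilityMeasure.tendsto_iff_forall_integral_tendsto.1 h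
        (BoundedContinuousFunction.ofNormedAddCommGroup g (hcont g (hGF hg)) |M| (hM g (hGF hg))))
        |>.eventually (Metric.ball_mem_nhds _ hη)
  filter_upwards [hGconv] with n hn f hf
  obtain ⟨g, hg, hfg⟩ := hGnet f hf
  calc dist (∫ x, f x ∂(μ : Measure X)) (∫ x, f x ∂(μs n : Measure X))
      ≤ dist (∫ x, f x ∂(μ : Measure X)) (∫ x, g x ∂(μ : Measure X))
        + dist (∫ x, g x ∂(μ : Measure X)) (∫ x, g x ∂(μs n : Measure X))
        + dist (∫ x, g x ∂(μs n : Measure X)) (∫ x, f x ∂(μs n : Measure X)) := dist_triangle4 ..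
    _ < (2 * |M| + 1) * η + η + (2 * |M| + 1) * η := by
        rw [dist_comm (∫ x, g x ∂(μ : Measure X)),
          dist_comm (∫ x, g x ∂(μs n : Measure X)) (∫ x, f x ∂(μs n : Measure X))]
        exact add_lt_add_of_lt_of_le (add_lt_add_of_le_of_lt (hclose _ hμK hf (hGF hg) hfg)
          (hn g hg)) (hclose _ (hμsK n) hf (hGF hg) hfg)
    _ = ε := by simp only [η]; field_simp; ring

theorem rao_uniform_weak_convergence
    (μseq : ℕ → Measure ℝ) (μ : Measure ℝ)
    [∀ n, IsProbabilityMeasure (μseq n)] [IsProbabilityMeasure μ]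
    (hweak : ∀ f : ℝ → ℝ, Continuous f → (∃ M, ∀ y, |f y| ≤ M) →
      Tendsto (fun n => ∫ y, f y ∂(μseq n)) atTop (nhds (∫ y, f y ∂μ)))
    (F : Set (ℝ → ℝ))
    (M : ℝ) (hM : ∀ f ∈ F, ∀ y, |f y| ≤ M)
    (hequi : ∀ y : ℝ, ∀ ε > 0, ∃ δ > 0, ∀ f ∈ F, ∀ y' : ℝ,
      |y' - y| < δ → |f y' - f y| < ε) :
    ∀ ε > 0, ∃ N : ℕ, ∀ n ≥ N, ∀ f ∈ F,
      |(∫ y, f y ∂(μseq n)) - ∫ y, f y ∂μ| < ε := by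
  have hμs : Tendsto (β := ProbabilityMeasure ℝ) (fun n ↦ ⟨μseq n, inferInstance⟩) atTop
      (𝓝 ⟨μ, inferInstance⟩) :=
    ProbabilityMeasure.tendsto_iff_forall_integral_tendsto.2 fun f ↦
      hweak f f.continuous ⟨‖f‖, f.norm_coe_le_norm⟩
  have hF : Equicontinuous ((↑) : F → ℝ → ℝ) := fun y ↦
    Metric.equicontinuousAt_iff.2 fun e he ↦ by
      obtain ⟨δ, hδ, h⟩ := hequi y e he
      exact ⟨δ, hδ, fun y' hy' f ↦ by rw [dist_comm]; exact h f f.2 y' hy'⟩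
  intro ε hε
  obtain ⟨N, hN⟩ := eventually_atTop.1 <| Metric.tendstoUniformlyOn_iff.1
    (tendstoUniformlyOn_integral_of_equicontinuous hμs hF hM) ε hε
  exact ⟨N, fun n hn f hf ↦ by rw [← Real.dist_eq, dist_comm]; exact hN n hn f hf⟩
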